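/- Let k be an algebraically closed field, 2 ≤ d ≤ n, and let u, v ∈ I^{Sp}_{d,2n} with u ≥^{Sp} v. Let M be a 2n×d matrix over k of rank d whose column span U satisfies dim(U ∩ K_{u_t}) ≥ t and dim(U ∩ K_{σ(v_t)}) ≤ t−1 for all 1 ≤ t ≤ d (i.e. U lies in the corresponding Richardson variety of the Grassmannian). Then U is isotropic — equivalently U belongs to the Richardson variety R(u,v) of Sp_{2n}(k)/P_d — if and only if: when d = 2, Σ_{t=1}^n (x_{t,1} x_{n+t,2} − x_{n+t,1} x_{t,2}) = 0 where M = (x_{a,b}); and when d ≥ 3, for every i = (i_1 < … < i_{d−2}) ∈ I_{d−2,2n} one has Σ_{t=1}^n det R(i,t) = 0, where R(i,t) is the d×d matrix whose rows, in order, are rows i_1, …, i_{d−2}, t, n+t of M (det R(i,t) = 0 whenever t or n+t occurs among the i_l). -/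

import Mathlib

open Matrix BigOperators

/-- The standard symplectic matrix `J = [[0, -Iₙ],[Iₙ, 0]]` of size `2n × 2n`. -/
def Jmat (k : Type*) [Field k] (n : ℕ) : Matrix (Fin (2*n)) (Fin (2*n)) k :=
  Matrix.of fun a b => if a.1 + n = b.1 then (-1 : k) else if b.1 + n = a.1 then 1 else 0

/-- A subspace `U ⊆ k^{2n}` is isotropic if `uᵀ J w = 0` for all `u, w ∈ U`. -/
def IsIsotropic (k : Type*) [Field k] (n : ℕ) (U : Submodule k (Fin (2*n) → k)) : Prop :=
  ∀ u ∈ U, ∀ w ∈ U, u ⬝ᵥ (Jmat k n).mulVec w = 0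

/-- `Kspace k n a` is the subspace `K_a` (with `a` a 1-indexed index in `{0,…,2n}`):
`K_0 = 0`, `K_a = span(e_1,…,e_a)` for `1 ≤ a ≤ n`, and
`K_{n+i} = span(e_1,…,e_n, e_{n+i},…,e_{2n})` for `1 ≤ i ≤ n`. -/
def Kspace (k : Type*) [Field k] (n : ℕ) (a : ℕ) : Submodule k (Fin (2*n) → k) :=
  Submodule.span k
    {v | ∃ p : Fin (2*n), ((p.1 < a ∧ p.1 < n) ∨ (n < a ∧ a ≤ p.1 + 1)) ∧ v = Pi.single p 1}

/-- `σ` on 1-indexed `{1,…,2n}`: `σ(a) = a-1` for `a ≤ n`, `σ(a) = a+1` for `n < a < 2n`,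
`σ(2n) = n`. -/
def sigmaFn (n a : ℕ) : ℕ := if a ≤ n then a - 1 else if a < 2*n then a + 1 else n

/-- Membership in `\overline{I}^{Sp}_{d,2n}` (0-indexed entries): a `d`-tuple of pairwise
distinct elements of `Fin (2n)` such that for some `r ≤ d`, the first `r` entries are
strictly increasing with (1-indexed) values `≤ n` and the remaining entries are strictly
decreasing with (1-indexed) values `> n`. -/
def IsSpBarTuple (n : ℕ) {d : ℕ} (i : Fin d → Fin (2*n)) : Prop :=
  Function.Injective i ∧ ∃ r ≤ d,
    (∀ a b : Fin d, a < b → b.1 < r → i a < i b) ∧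
    (∀ a : Fin d, a.1 < r → (i a).1 < n) ∧
    (∀ a b : Fin d, a < b → r ≤ a.1 → i b < i a) ∧
    (∀ a : Fin d, r ≤ a.1 → n ≤ (i a).1)

/-- Membership in `I^{Sp}_{d,2n}`: a tuple of `\overline{I}^{Sp}_{d,2n}` whose entries
contain no pair `{t, n+t}`. -/
def IsSpTuple (n : ℕ) {d : ℕ} (i : Fin d → Fin (2*n)) : Prop :=
  IsSpBarTuple n i ∧ ∀ a b : Fin d, (i b).1 ≠ (i a).1 + n

/-- The order `i ≥^{Sp} j`: for every `t`, `i_t ≥ j_t` if `j_t ≤ n` (1-indexed), and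
`n < i_t ≤ j_t` if `j_t > n`. -/
def spGE (n : ℕ) {d : ℕ} (i j : Fin d → Fin (2*n)) : Prop :=
  ∀ t : Fin d, if (j t).1 < n then j t ≤ i t else (n ≤ (i t).1 ∧ i t ≤ j t)

/-- The coordinate subspace `e_i = span(e_{i_1},…,e_{i_d})`. -/
def eSpan (k : Type*) [Field k] {n d : ℕ} (i : Fin d → Fin (2*n)) :
    Submodule k (Fin (2*n) → k) :=
  Submodule.span k (Set.range fun t => Pi.single (i t) (1 : k))

/-- The Borel subgroup `B` of `Sp_{2n}(k)`: symplectic matrices of block form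
`[[A, B'],[0, D]]` with `A` upper triangular. -/
def inB (k : Type*) [Field k] (n : ℕ) (M : Matrix (Fin (2*n)) (Fin (2*n)) k) : Prop :=
  Mᵀ * Jmat k n * M = Jmat k n ∧
  ∀ a b : Fin (2*n), ((n ≤ a.1 ∧ b.1 < n) ∨ (a.1 < n ∧ b.1 < n ∧ b.1 < a.1)) → M a b = 0

/-- The opposite Borel subgroup `B⁻` of `Sp_{2n}(k)`: symplectic matrices of block form
`[[A, 0],[C, D]]` with `A` lower triangular. -/
def inBminus (k : Type*) [Field k] (n : ℕ) (M : Matrix (Fin (2*n)) (Fin (2*n)) k) : Prop :=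
  Mᵀ * Jmat k n * M = Jmat k n ∧
  ∀ a b : Fin (2*n), ((a.1 < n ∧ n ≤ b.1) ∨ (a.1 < n ∧ b.1 < n ∧ a.1 < b.1)) → M a b = 0

/-- The Plücker coordinate `p_S(M)`: determinant of the `d×d` submatrix of `M` formed by
the rows in `S` taken in increasing order (and `0` if `S` does not have `d` elements). -/
def pluckerS {k : Type*} [Field k] {n d : ℕ} (M : Matrix (Fin (2*n)) (Fin d) k)
    (S : Finset (Fin (2*n))) : k :=
  if hS : S.card = d then
    (M.submatrix (fun a => (S.orderIsoOfFin hS a : Fin (2*n))) id).det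
  else 0

/-- The Plücker coordinate attached to the underlying set of a tuple `j`. -/
def pluckerT {k : Type*} [Field k] {n d : ℕ} (M : Matrix (Fin (2*n)) (Fin d) k)
    (j : Fin d → Fin (2*n)) : k :=
  pluckerS M (Finset.image j Finset.univ)

/-- The row-selection function for `R(i,t)`: rows `i_1, …, i_{d-2}, t, n+t` in order. -/
def rowsFn {n : ℕ} (d : ℕ) (i : Fin (d-2) → Fin (2*n)) (t : Fin n) : Fin d → Fin (2*n) :=
  fun l =>
    if h : l.1 < d - 2 then i ⟨l.1, h⟩
    else if l.1 = d - 2 then ⟨t.1, by have := t.2; omega⟩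
    else ⟨n + t.1, by have := t.2; omega⟩

/-- The column-selection function enumerating, in increasing order, the columns of a
`2n × d` matrix other than `j1 < j2`. -/
def colSkip (d : ℕ) (j1 j2 : Fin d) (c : Fin (d-2)) : Fin d :=
  if c.1 < j1.1 then ⟨c.1, by have := c.2; omega⟩
  else if c.1 + 1 < j2.1 then ⟨c.1 + 1, by have := c.2; omega⟩
  else ⟨c.1 + 2, by have := c.2; omega⟩

/-- Membership of a subspace `U` in the Richardson variety `R(u,v)` of `Sp_{2n}(k)/P_d`:
`U` is a `d`-dimensional isotropic subspace with `dim(U ∩ K_{u_t}) ≥ t` and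
`dim(U ∩ K_{σ(v_t)}) ≤ t-1` for all `1 ≤ t ≤ d`. -/
def inRich (k : Type*) [Field k] (n : ℕ) {d : ℕ} (u v : Fin d → Fin (2*n))
    (U : Submodule k (Fin (2*n) → k)) : Prop :=
  IsIsotropic k n U ∧ Module.finrank k U = d ∧
  ∀ t : Fin d,
    t.1 + 1 ≤ Module.finrank k ↥(U ⊓ Kspace k n ((u t).1 + 1)) ∧
    Module.finrank k ↥(U ⊓ Kspace k n (sigmaFn n ((v t).1 + 1))) ≤ t.1

/-!
Isotropy of the column span `U` of `M` says that `G = (∑ₜ x_{t,a} x_{n+t,b})_{a,b}` is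
symmetric, because `Mᵀ J M = Gᵀ - G`. For fixed rows `r`, `(x, y) ↦ det (r; x; y)` is an
alternating bilinear form `β`, and expanding the last two rows gives
`∑ₜ det R(i,t) = ∑_{a,b} G_{ab} β(e_a, e_b)`, which vanishes when `G` is symmetric.
Conversely, replacing `M` by `M B⁻¹` for an invertible `d × d` submatrix `B` changes neither
`U` nor the vanishing of these sums, and makes `d` rows of `M` the unit vectors. Choosing for
`i` the rows `e_c` with `c ∉ {a, b}` kills every term except `(G_{ab} - G_{ba}) β(e_a, e_b)`,
and `β(e_a, e_b)` is the determinant of a permutation matrix.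
-/

namespace SymplecticRichardson

variable {k : Type*} {n d : ℕ}

def fstHalf (t : Fin n) : Fin (2*n) := ⟨t, by omega⟩

def sndHalf (t : Fin n) : Fin (2*n) := ⟨n + t, by omega⟩

lemma sum_fin_two_mul {β : Type*} [AddCommMonoid β] (f : Fin (2*n) → β) :
    ∑ s, f s = ∑ t : Fin n, f (fstHalf t) + ∑ t : Fin n, f (sndHalf t) := by
  rw [← Equiv.sum_comp (finSumFinEquiv.trans (finCongr (two_mul n).symm)) f,
    Fintype.sum_sum_type]
  rfl

def stackRows {α : Type*} (r : Fin (d-2) → α) (x y : α) : Fin d → α :=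
  fun l => if h : l.1 < d - 2 then r ⟨l, h⟩ else if l.1 = d - 2 then x else y

section StackRows

variable {α β : Type*} (r : Fin (d-2) → α) (x y : α)

lemma comp_stackRows (f : α → β) : f ∘ stackRows r x y = stackRows (f ∘ r) (f x) (f y) := by
  funext l
  simp only [Function.comp, stackRows]
  split_ifs <;> rfl

lemma stackRows_apply_of_forall {P : α → Prop} (hr : ∀ l, P (r l)) (hx : P x) (hy : P y)
    (l : Fin d) :
    P (stackRows r x y l) := by
  simp only [stackRows]
  split_ifs
  exacts [hr _, hx, hy]

lemma stackRows_injective (hr : Function.Injective r) (hxy : x ≠ y) (hx : ∀ l, r l ≠ x)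
    (hy : ∀ l, r l ≠ y) : Function.Injective (stackRows (d := d) r x y) := by
  intro l m h
  simp only [stackRows] at h
  apply Fin.ext
  split_ifs at h
  all_goals first
    | omega
    | exact Fin.mk.inj_iff.mp (hr h)
    | exact absurd h (hx _) | exact absurd h.symm (hx _)
    | exact absurd h (hy _) | exact absurd h.symm (hy _)
    | exact absurd h hxy | exact absurd h.symm hxy

variable (hd : 2 ≤ d)
include hd

lemma stackRows_eq_update_penultimate (x' : α) :
    stackRows r x y = Function.update (stackRows r x' y) ⟨d - 2, by omega⟩ x := by
  funext l
  simp only [stackRows, Function.update_apply, Fin.ext_iff]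
  split_ifs <;> first | rfl | omega

lemma stackRows_eq_update_last (y' : α) :
    stackRows r x y = Function.update (stackRows r x y') ⟨d - 1, by omega⟩ y := by
  funext l
  simp only [stackRows, Function.update_apply, Fin.ext_iff]
  split_ifs <;> first | rfl | omega

lemma stackRows_penultimate_eq_last :
    stackRows r x x ⟨d - 2, by omega⟩ = stackRows r x x ⟨d - 1, by omega⟩ := by
  simp only [stackRows]
  split_ifs <;> first | rfl | omega

end StackRows

variable [Field k]

lemma Jmat_fstHalf_apply (t : Fin n) (s : Fin (2*n)) :
    Jmat k n (fstHalf t) s = if s = sndHalf t then -1 else 0 := by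
  simp only [Jmat, of_apply, fstHalf, sndHalf, Fin.ext_iff]
  split_ifs <;> first | rfl | (exfalso; omega)

lemma Jmat_sndHalf_apply (t : Fin n) (s : Fin (2*n)) :
    Jmat k n (sndHalf t) s = if s = fstHalf t then 1 else 0 := by
  simp only [Jmat, of_apply, fstHalf, sndHalf, Fin.ext_iff]
  split_ifs <;> first | rfl | (exfalso; omega)

lemma Jmat_mulVec_fstHalf (w : Fin (2*n) → k) (t : Fin n) :
    (Jmat k n *ᵥ w) (fstHalf t) = -w (sndHalf t) := by
  simp [mulVec, dotProduct, Jmat_fstHalf_apply]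

lemma Jmat_mulVec_sndHalf (w : Fin (2*n) → k) (t : Fin n) :
    (Jmat k n *ᵥ w) (sndHalf t) = w (fstHalf t) := by
  simp [mulVec, dotProduct, Jmat_sndHalf_apply]

lemma dotProduct_Jmat_mulVec (v w : Fin (2*n) → k) :
    v ⬝ᵥ (Jmat k n *ᵥ w)
      = ∑ t, (v (sndHalf t) * w (fstHalf t) - v (fstHalf t) * w (sndHalf t)) := by
  rw [dotProduct, sum_fin_two_mul, Finset.sum_sub_distrib, sub_eq_neg_add]
  simp only [Jmat_mulVec_fstHalf, Jmat_mulVec_sndHalf, mul_neg, Finset.sum_neg_distrib]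

def crossGram (M : Matrix (Fin (2*n)) (Fin d) k) : Matrix (Fin d) (Fin d) k :=
  (M.submatrix fstHalf id)ᵀ * M.submatrix sndHalf id

lemma crossGram_apply (M : Matrix (Fin (2*n)) (Fin d) k) (a b : Fin d) :
    crossGram M a b = ∑ t, M (fstHalf t) a * M (sndHalf t) b := rfl

lemma transpose_mul_Jmat_mul (M : Matrix (Fin (2*n)) (Fin d) k) :
    Mᵀ * Jmat k n * M = (crossGram M)ᵀ - crossGram M := by
  ext a b
  rw [Matrix.mul_assoc]
  change (fun s => M s a) ⬝ᵥ (Jmat k n *ᵥ fun s => M s b) = _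
  rw [dotProduct_Jmat_mulVec, Finset.sum_sub_distrib]
  simp only [Matrix.sub_apply, transpose_apply, crossGram_apply, mul_comm]

lemma mulVec_dotProduct_Jmat_mulVec_mulVec (M : Matrix (Fin (2*n)) (Fin d) k) (x y : Fin d → k) :
    (M *ᵥ x) ⬝ᵥ (Jmat k n *ᵥ (M *ᵥ y)) = x ⬝ᵥ ((Mᵀ * Jmat k n * M) *ᵥ y) := by
  rw [mulVec_mulVec, dotProduct_mulVec, dotProduct_mulVec, ← vecMul_transpose, vecMul_vecMul,
    Matrix.mul_assoc]

lemma isIsotropic_range_iff_transpose_mul_Jmat_mul_eq_zero (M : Matrix (Fin (2*n)) (Fin d) k) :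
    IsIsotropic k n (LinearMap.range M.mulVecLin) ↔ Mᵀ * Jmat k n * M = 0 := by
  constructor
  · intro h
    ext a b
    have hab := h _ ⟨Pi.single a 1, rfl⟩ _ ⟨Pi.single b 1, rfl⟩
    rw [mulVecLin_apply, mulVecLin_apply, mulVec_dotProduct_Jmat_mulVec_mulVec] at hab
    simpa using hab
  · rintro h _ ⟨x, rfl⟩ _ ⟨y, rfl⟩
    rw [mulVecLin_apply, mulVecLin_apply, mulVec_dotProduct_Jmat_mulVec_mulVec, h, zero_mulVec,
      dotProduct_zero]

lemma isIsotropic_range_iff_isSymm (M : Matrix (Fin (2*n)) (Fin d) k) :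
    IsIsotropic k n (LinearMap.range M.mulVecLin) ↔ (crossGram M).IsSymm := by
  rw [isIsotropic_range_iff_transpose_mul_Jmat_mul_eq_zero, transpose_mul_Jmat_mul, sub_eq_zero]
  rfl

lemma range_mulVecLin_mul_of_isUnit {m : Type*} [Fintype m] [DecidableEq m]
    (N : Matrix (Fin (2*n)) m k) {B : Matrix m m k} (hB : IsUnit B) :
    LinearMap.range (N * B).mulVecLin = LinearMap.range N.mulVecLin := by
  rw [mulVecLin_mul, LinearMap.range_comp_of_range_eq_top]
  exact LinearMap.range_eq_top.mpr (mulVec_surjective_iff_isUnit.mpr hB)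

lemma sum_apply_fstHalf_sndHalf (β : (Fin d → k) →ₗ[k] (Fin d → k) →ₗ[k] k)
    (M : Matrix (Fin (2*n)) (Fin d) k) :
    ∑ t, β (M (fstHalf t)) (M (sndHalf t))
      = ∑ p : Fin d × Fin d, crossGram M p.1 p.2 * β (Pi.single p.1 1) (Pi.single p.2 1) := by
  have hβ : ∀ x y, β x y = ∑ a, ∑ b, x a * y b * β (Pi.single a 1) (Pi.single b 1) := by
    intro x y
    conv_lhs => rw [← Matrix.toLinearMap₂'_toMatrix' (R := k) β]
    simp only [Matrix.toLinearMap₂'_apply, LinearMap.toMatrix₂'_apply, smul_eq_mul, mul_assoc]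
  simp_rw [hβ (M (fstHalf _)), Fintype.sum_prod_type, crossGram_apply, Finset.sum_mul]
  rw [Finset.sum_comm]
  refine Finset.sum_congr rfl fun a _ => ?_
  rw [Finset.sum_comm]

lemma sum_isSymm_mul_isAlt_eq_zero {ι : Type*} [Fintype ι] [DecidableEq ι]
    {S : Matrix ι ι k} (hS : S.IsSymm) {β : (ι → k) →ₗ[k] (ι → k) →ₗ[k] k}
    (hβ : β.IsAlt) :
    ∑ p : ι × ι, S p.1 p.2 * β (Pi.single p.1 1) (Pi.single p.2 1) = 0 := by
  refine Finset.sum_involution (fun p _ => p.swap) ?_ ?_ (by simp) (by simp)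
  · rintro ⟨a, b⟩ _
    rw [Prod.fst_swap, Prod.snd_swap, ← hβ.neg, hS.apply]
    ring
  · rintro ⟨a, b⟩ _ hne hswap
    obtain rfl : b = a := congrArg Prod.fst hswap
    exact hne (by rw [hβ.self_eq_zero, mul_zero])

section DetStackRows

variable (hd : 2 ≤ d) (r : Fin (d-2) → Fin d → k)

def detStackRows : (Fin d → k) →ₗ[k] (Fin d → k) →ₗ[k] k :=
  LinearMap.mk₂ k (fun x y => det (of (stackRows r x y)))
    (fun x x' y => by
      rw [stackRows_eq_update_penultimate r (x + x') y hd 0,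
        stackRows_eq_update_penultimate r x y hd 0, stackRows_eq_update_penultimate r x' y hd 0]
      exact det_updateRow_add _ _ _ _)
    (fun c x y => by
      rw [stackRows_eq_update_penultimate r (c • x) y hd 0,
        stackRows_eq_update_penultimate r x y hd 0]
      exact det_updateRow_smul _ _ _ _)
    (fun x y y' => by
      rw [stackRows_eq_update_last r x (y + y') hd 0,
        stackRows_eq_update_last r x y hd 0, stackRows_eq_update_last r x y' hd 0]
      exact det_updateRow_add _ _ _ _)
    (fun c x y => by
      rw [stackRows_eq_update_last r x (c • y) hd 0, stackRows_eq_update_last r x y hd 0]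
      exact det_updateRow_smul _ _ _ _)

lemma detStackRows_apply (x y : Fin d → k) :
    detStackRows hd r x y = det (of (stackRows r x y)) := rfl

lemma isAlt_detStackRows : (detStackRows hd r).IsAlt := fun x =>
  det_zero_of_row_eq (by simp [Fin.ext_iff]; omega) (stackRows_penultimate_eq_last r x hd)

end DetStackRows

lemma det_submatrix_rowsFn (hd : 2 ≤ d) (M : Matrix (Fin (2*n)) (Fin d) k)
    (i : Fin (d-2) → Fin (2*n)) (t : Fin n) :
    det (M.submatrix (rowsFn d i t) id)
      = detStackRows hd (M ∘ i) (M (fstHalf t)) (M (sndHalf t)) := by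
  rw [detStackRows_apply]
  congr 1
  ext l j
  simp only [submatrix_apply, id, rowsFn, of_apply, stackRows]
  split_ifs <;> rfl

lemma sum_det_submatrix_rowsFn (hd : 2 ≤ d) (M : Matrix (Fin (2*n)) (Fin d) k)
    (i : Fin (d-2) → Fin (2*n)) :
    ∑ t, det (M.submatrix (rowsFn d i t) id)
      = ∑ p : Fin d × Fin d,
          crossGram M p.1 p.2 * detStackRows hd (M ∘ i) (Pi.single p.1 1) (Pi.single p.2 1) := by
  simp_rw [det_submatrix_rowsFn hd]
  exact sum_apply_fstHalf_sndHalf _ M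

lemma sum_det_submatrix_rowsFn_eq_zero (hd : 2 ≤ d) {M : Matrix (Fin (2*n)) (Fin d) k}
    (hM : (crossGram M).IsSymm) (i : Fin (d-2) → Fin (2*n)) :
    ∑ t, det (M.submatrix (rowsFn d i t) id) = 0 := by
  rw [sum_det_submatrix_rowsFn hd]
  exact sum_isSymm_mul_isAlt_eq_zero hM (isAlt_detStackRows hd _)

section SingleRows

variable (hd : 2 ≤ d) {c : Fin (d-2) → Fin d}

lemma stackRows_single (a b : Fin d) :
    stackRows (fun l => Pi.single (c l) (1 : k)) (Pi.single a 1) (Pi.single b 1)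
      = (fun j => Pi.single j (1 : k)) ∘ stackRows c a b :=
  (comp_stackRows c a b (fun j => Pi.single j (1 : k))).symm

lemma detStackRows_single_eq_zero {a x y : Fin d} (hc : ∀ l, c l ≠ a) (hx : x ≠ a)
    (hy : y ≠ a) :
    detStackRows hd (fun l => Pi.single (c l) (1 : k)) (Pi.single x 1) (Pi.single y 1) = 0 := by
  rw [detStackRows_apply, stackRows_single]
  refine det_eq_zero_of_column_eq_zero a fun l => ?_
  exact Pi.single_eq_of_ne (stackRows_apply_of_forall (P := (· ≠ a)) c x y hc hx hy l).symm _

lemma detStackRows_single_ne_zero (hc : Function.Injective c) {a b : Fin d} (hab : a ≠ b)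
    (ha : ∀ l, c l ≠ a) (hb : ∀ l, c l ≠ b) :
    detStackRows hd (fun l => Pi.single (c l) (1 : k)) (Pi.single a 1) (Pi.single b 1) ≠ 0 := by
  rw [detStackRows_apply, stackRows_single, ← isUnit_iff_ne_zero, ← isUnit_iff_isUnit_det,
    ← linearIndependent_rows_iff_isUnit]
  exact (Pi.linearIndependent_single_one (Fin d) k).comp _
    (stackRows_injective c a b hc hab ha hb)

end SingleRows

lemma isSymm_crossGram_of_submatrix_eq_one (hd : 2 ≤ d) {N : Matrix (Fin (2*n)) (Fin d) k}
    {s : Fin d → Fin (2*n)} (hs : StrictMono s) (hN : N.submatrix s id = 1)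
    (h : ∀ i : Fin (d-2) → Fin (2*n), StrictMono i →
      ∑ t, det (N.submatrix (rowsFn d i t) id) = 0) :
    (crossGram N).IsSymm := by
  refine IsSymm.ext fun b a => ?_
  rcases eq_or_ne a b with rfl | hab
  · rfl
  obtain ⟨c, hc⟩ : ∃ c : Fin (d-2) ↪o Fin d, ∀ l, c l ≠ a ∧ c l ≠ b := by
    have hcard : ({a, b}ᶜ : Finset (Fin d)).card = d - 2 := by
      rw [Finset.card_compl, Finset.card_pair hab, Fintype.card_fin]
    refine ⟨({a, b}ᶜ : Finset (Fin d)).orderEmbOfFin hcard, fun l => ?_⟩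
    have hl := Finset.mem_compl.mp (Finset.orderEmbOfFin_mem _ hcard l)
    simpa only [Finset.mem_insert, Finset.mem_singleton, not_or] using hl
  have hrows : N ∘ (s ∘ c) = fun l => Pi.single (c l) 1 := by
    funext l j
    exact (congrFun (congrFun hN (c l)) j).trans (one_eq_pi_single ..)
  have hsum := h (s ∘ c) (hs.comp c.strictMono)
  rw [sum_det_submatrix_rowsFn hd, hrows, Fintype.sum_eq_add (a, b) (b, a) (by simp [hab])] at hsum
  · rw [← (isAlt_detStackRows hd _).neg (Pi.single a 1)] at hsum
    have hne := detStackRows_single_ne_zero (k := k) hd c.injective hab (fun l => (hc l).1)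
      (fun l => (hc l).2)
    apply sub_eq_zero.mp
    apply (mul_eq_zero.mp _).resolve_right hne
    linear_combination hsum
  · rintro ⟨x, y⟩ ⟨hab', hba'⟩
    have hxy : (x ≠ a ∧ y ≠ a) ∨ (x ≠ b ∧ y ≠ b) := by
      simp only [ne_eq, Prod.mk.injEq] at hab' hba'
      grind
    refine mul_eq_zero_of_right _ ?_
    rcases hxy with ⟨hx, hy⟩ | ⟨hx, hy⟩
    exacts [detStackRows_single_eq_zero hd (fun l => (hc l).1) hx hy,
      detStackRows_single_eq_zero hd (fun l => (hc l).2) hx hy]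

lemma exists_strictMono_isUnit_submatrix {m : Type*} [Fintype m] [LinearOrder m]
    (M : Matrix m (Fin d) k) (hM : M.rank = d) :
    ∃ s : Fin d → m, StrictMono s ∧ IsUnit (M.submatrix s id) := by
  classical
  obtain ⟨b, -, -, hspan, hli⟩ :=
    exists_linearIndepOn_extension (linearIndepOn_empty k M.row) (Set.empty_subset Set.univ)
  have hcard : b.toFinset.card = d := by
    have hspan_eq : Submodule.span k (M.row '' b) = Submodule.span k (Set.range M.row) :=
      le_antisymm (Submodule.span_mono (Set.image_subset_range _ _))
        (Submodule.span_le.mpr (by simpa using hspan))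
    rw [Set.toFinset_card, linearIndependent_iff_card_eq_finrank_span.mp hli, Set.finrank,
      ← Set.image_eq_range, hspan_eq, ← rank_eq_finrank_span_row, hM]
  let s := b.toFinset.orderEmbOfFin hcard
  refine ⟨s, s.strictMono, linearIndependent_rows_iff_isUnit.mp ?_⟩
  exact hli.comp (fun l => ⟨s l, Set.mem_toFinset.mp (b.toFinset.orderEmbOfFin_mem hcard l)⟩)
    fun l l' h => s.injective (Subtype.mk.inj h)

lemma sum_det_submatrix_rowsFn_mul (N : Matrix (Fin (2*n)) (Fin d) k)
    (B : Matrix (Fin d) (Fin d) k) (i : Fin (d-2) → Fin (2*n)) :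
    ∑ t, det ((N * B).submatrix (rowsFn d i t) id)
      = (∑ t, det (N.submatrix (rowsFn d i t) id)) * det B := by
  rw [Finset.sum_mul]
  exact Finset.sum_congr rfl fun t _ => det_mul _ _

lemma isSymm_crossGram_of_sum_det_eq_zero (hd : 2 ≤ d) {M : Matrix (Fin (2*n)) (Fin d) k}
    (hM : M.rank = d)
    (h : ∀ i : Fin (d-2) → Fin (2*n), StrictMono i →
      ∑ t, det (M.submatrix (rowsFn d i t) id) = 0) :
    (crossGram M).IsSymm := by
  obtain ⟨s, hs, hB⟩ := exists_strictMono_isUnit_submatrix M hM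
  set B := M.submatrix s id
  have hdetB := (isUnit_iff_isUnit_det B).mp hB
  have hNB : M * B⁻¹ * B = M := nonsing_inv_mul_cancel_right B M hdetB
  have hN : (M * B⁻¹).submatrix s id = 1 := mul_nonsing_inv B hdetB
  have hsymm := isSymm_crossGram_of_submatrix_eq_one hd hs hN fun i hi => by
    have hMi := h i hi
    rw [← hNB, sum_det_submatrix_rowsFn_mul] at hMi
    exact (mul_eq_zero.mp hMi).resolve_right hdetB.ne_zero
  rw [← isIsotropic_range_iff_isSymm] at hsymm ⊢
  rwa [← hNB, range_mulVecLin_mul_of_isUnit _ hB]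

lemma sum_fstHalf_mul_sndHalf_sub (M : Matrix (Fin (2*n)) (Fin d) k) (a b : Fin d) :
    ∑ t, (M (fstHalf t) a * M (sndHalf t) b - M (sndHalf t) a * M (fstHalf t) b)
      = crossGram M a b - crossGram M b a := by
  rw [Finset.sum_sub_distrib]
  exact congrArg _ (Finset.sum_congr rfl fun t _ => mul_comm _ _)

lemma isSymm_of_fin_two {α : Type*} {A : Matrix (Fin 2) (Fin 2) α} (h : A 0 1 = A 1 0) :
    A.IsSymm :=
  IsSymm.ext fun a b => by fin_cases a <;> fin_cases b <;> simp [h]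

end SymplecticRichardson

open SymplecticRichardson

theorem stmt7 {k : Type*} [Field k] (n d : ℕ) (hd : 2 ≤ d)
    (M : Matrix (Fin (2*n)) (Fin d) k) (hM : M.rank = d) :
    IsIsotropic k n (LinearMap.range M.mulVecLin) ↔
      ((d = 2 →
        ∑ t : Fin n,
          (M ⟨t.1, by have := t.2; omega⟩ ⟨0, by omega⟩
              * M ⟨n + t.1, by have := t.2; omega⟩ ⟨1, by omega⟩
            - M ⟨n + t.1, by have := t.2; omega⟩ ⟨0, by omega⟩
              * M ⟨t.1, by have := t.2; omega⟩ ⟨1, by omega⟩) = 0) ∧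
       (3 ≤ d →
        ∀ i : Fin (d-2) → Fin (2*n), StrictMono i →
          ∑ t : Fin n, (M.submatrix (rowsFn d i t) id).det = 0)) := by
  rw [isIsotropic_range_iff_isSymm]
  constructor
  · intro hsymm
    refine ⟨fun _ => ?_, fun _ i _ => sum_det_submatrix_rowsFn_eq_zero hd hsymm i⟩
    exact (sum_fstHalf_mul_sndHalf_sub M _ _).trans (by rw [hsymm.apply, sub_self])
  · rintro ⟨h2, h3⟩
    rcases hd.eq_or_lt with rfl | hd3
    · exact isSymm_of_fin_two
        (sub_eq_zero.mp ((sum_fstHalf_mul_sndHalf_sub M 0 1).symm.trans (h2 rfl)))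
    · exact isSymm_crossGram_of_sum_det_eq_zero hd hM (h3 hd3)
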